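/- arXiv:0801.2815 — 6 statements merged into one kernel-verified Lean document; each statement's English description precedes it below -/
import Mathlib

section
/- Let H be a complex Hilbert space and T a self-adjoint bounded linear operator on H. Let λ ∈ ℝ and δ > 0 be such that the spectrum of T intersects the closed disc {z ∈ ℂ : |z − λ| ≤ δ} only in the set {λ}. Then (2πi)⁻¹ times the counterclockwise circle integral over the circle |z − λ| = δ of the resolvent (z·1 − T)⁻¹ equals the orthogonal projection of H onto the eigenspace ker(T − λ·1). -/
open scoped Real

/-- The orthogonal projection of `H` onto the eigenspace `ker (T - λ·1)`,
viewed as a bounded operator on `H`. -/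
noncomputable def eigenProjection {H : Type*} [NormedAddCommGroup H] [InnerProductSpace ℂ H]
    [CompleteSpace H] (T : H →L[ℂ] H) (μ : ℂ) : H →L[ℂ] H :=
  (LinearMap.ker ((T - μ • (1 : H →L[ℂ] H) : H →L[ℂ] H) : H →ₗ[ℂ] H)).subtypeL.comp
    (Submodule.orthogonalProjectionOnto
      (LinearMap.ker ((T - μ • (1 : H →L[ℂ] H) : H →L[ℂ] H) : H →ₗ[ℂ] H)))

/-!
For normal `T`, the continuous functional calculus writes the resolvent at a point `z` of the
circle as `cfc (fun x => (z - x)⁻¹) T`, and it commutes with the contour integral. So the Riesz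
integral is `cfc` of `x ↦ (2πi)⁻¹ ∮ (z - x)⁻¹ dz`, the indicator of the open disc. On the spectrum
this is the indicator `g` of the isolated point `λ`, and `P = cfc g T` is a self-adjoint idempotent
with `(T - λ) P = 0` and `1 - P = K (T - λ)`, so `P` is the orthogonal projection onto
`ker (T - λ)`.
-/

open Complex Metric MeasureTheory Filter Topology Set

theorem continuousOn_of_not_accPt {X Y : Type*} [TopologicalSpace X] [TopologicalSpace Y]
    {s : Set X} {μ : X} (hμ : ¬AccPt μ (𝓟 s)) {f : X → Y}
    (hf : ∀ x ∈ s, x ≠ μ → ContinuousAt f x) : ContinuousOn f s := by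
  intro x hx
  rcases eq_or_ne x μ with rfl | hne
  · rw [accPt_principal_iff_nhdsWithin, not_neBot] at hμ
    rw [← continuousWithinAt_sdiff_self]
    simp [ContinuousWithinAt, hμ]
  · exact (hf x hx hne).continuousWithinAt

theorem circleIntegral.integral_sub_inv_of_notMem_closedBall {c x : ℂ} {R : ℝ} (hR : 0 ≤ R)
    (hx : x ∉ closedBall c R) : ∮ z in C(c, R), (z - x)⁻¹ = 0 := by
  have hne : ∀ z ∈ closedBall c R, z - x ≠ 0 := fun z hz h => hx (sub_eq_zero.mp h ▸ hz)
  refine circleIntegral_eq_zero_of_differentiable_on_off_countable hR countable_empty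
    ((continuousOn_id.sub continuousOn_const).inv₀ hne) fun z hz => ?_
  exact (differentiableAt_id.sub_const x).inv (hne z (ball_subset_closedBall hz.1))

theorem resolvent_eq_cfc {R A : Type*} {p : A → Prop} [Field R] [StarRing R] [MetricSpace R]
    [IsTopologicalRing R] [ContinuousStar R] [ContinuousInv₀ R] [TopologicalSpace A] [Ring A]
    [StarRing A] [Algebra R A] [ContinuousFunctionalCalculus R A p] {a : A} {z : R}
    (hz : z ∉ spectrum R a) (ha : p a := by cfc_tac) :
    resolvent a z = cfc (fun x => (z - x)⁻¹) a := by
  have hne : ∀ x ∈ spectrum R a, z - x ≠ 0 := fun x hx h => hz (sub_eq_zero.mp h ▸ hx)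
  rw [cfc_inv (fun x => z - x) a hne, cfc_sub _ _, cfc_const z a, cfc_id' R a]
  rfl

theorem circleIntegral.integral_sub_inv_eq_indicator {c x : ℂ} {R : ℝ} (hR : 0 ≤ R)
    (hx : x ∉ sphere c R) :
    ∮ z in C(c, R), (z - x)⁻¹ = 2 * π * I * (ball c R).indicator 1 x := by
  by_cases hball : x ∈ ball c R
  · simp [integral_sub_inv_of_mem_ball hball, hball]
  · have hout : x ∉ closedBall c R := by
      rw [← ball_union_sphere]
      exact not_or_intro hball hx
    simp [integral_sub_inv_of_notMem_closedBall hR hout, hball]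

theorem continuousOn_indicator_ball_of_disjoint_sphere {E β : Type*} [SeminormedAddCommGroup E]
    [TopologicalSpace β] [Zero β] {s : Set E} {c : E} {R : ℝ} (hs : Disjoint (sphere c R) s)
    {f : E → β} (hf : Continuous f) : ContinuousOn ((ball c R).indicator f) s := by
  classical
  rw [← piecewise_eq_indicator]
  refine hf.continuousOn.piecewise (fun x hx => ?_) continuousOn_const
  exact absurd hx.1 (hs.notMem_of_mem_left (frontier_ball_subset_sphere hx.2))

section ContinuousFunctionalCalculus

variable {A : Type*} {p : A → Prop} [NormedRing A] [StarRing A] [NormedAlgebra ℂ A]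
  [ContinuousFunctionalCalculus ℂ A p] [CompleteSpace A]

theorem circleIntegral_resolvent_eq_cfc {a : A} {c : ℂ} {R : ℝ}
    (hR : Disjoint (sphere c |R|) (spectrum ℂ a)) (ha : p a := by cfc_tac) :
    ∮ z in C(c, R), resolvent a z = cfc (fun x => ∮ z in C(c, R), (z - x)⁻¹) a := by
  set f : ℝ → ℂ → ℂ := fun θ x => deriv (circleMap c R) θ * (circleMap c R θ - x)⁻¹
  have hcircle : ∀ θ, circleMap c R θ ∉ spectrum ℂ a :=
    fun θ => hR.notMem_of_mem_left (circleMap_mem_sphere' c R θ)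
  have hne : ∀ θ, ∀ x ∈ spectrum ℂ a, circleMap c R θ - x ≠ 0 :=
    fun θ x hx h => hcircle θ (sub_eq_zero.mp h ▸ hx)
  have hf : ContinuousOn (Function.uncurry f) (univ ×ˢ spectrum ℂ a) := by
    simp only [f, deriv_circleMap]
    exact (by fun_prop : Continuous fun q : ℝ × ℂ => circleMap 0 R q.1 * I).continuousOn.mul
      ((by fun_prop : Continuous fun q : ℝ × ℂ => circleMap c R q.1 - q.2).continuousOn.inv₀
        fun q hq => hne q.1 q.2 hq.2)
  obtain ⟨C, hC⟩ := (isCompact_Icc.prod (spectrum.isCompact a)).exists_bound_of_continuousOn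
    (hf.mono (prod_mono (subset_univ (Icc 0 (2 * π))) subset_rfl))
  have hcfc_integral := cfc_setIntegral (μ := volume) measurableSet_Ioc f (fun _ => C) a
    (hf.mono (prod_mono (subset_univ _) subset_rfl))
    (ae_restrict_of_forall_mem measurableSet_Ioc fun θ hθ x hx =>
      hC (θ, x) ⟨Ioc_subset_Icc_self hθ, hx⟩)
    (hasFiniteIntegral_const C)
  simp only [circleIntegral, intervalIntegral.integral_of_le Real.two_pi_pos.le, smul_eq_mul]
  rw [hcfc_integral]
  refine setIntegral_congr_fun measurableSet_Ioc fun θ _ => ?_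
  rw [resolvent_eq_cfc (hcircle θ)]
  exact (cfc_const_mul _ _ a ((continuousOn_const.sub continuousOn_id).inv₀ (hne θ))).symm

theorem riesz_projection_eq_cfc_indicator {a : A} {c : ℂ} {R : ℝ} (hR : 0 ≤ R)
    (hsphere : Disjoint (sphere c R) (spectrum ℂ a)) (ha : p a := by cfc_tac) :
    (2 * π * I)⁻¹ • ∮ z in C(c, R), resolvent a z = cfc ((ball c R).indicator 1) a := by
  rw [circleIntegral_resolvent_eq_cfc (by rwa [abs_of_nonneg hR]),
    cfc_congr fun x hx => circleIntegral.integral_sub_inv_eq_indicator hR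
      (hsphere.notMem_of_mem_right hx),
    cfc_const_mul _ _ a (continuousOn_indicator_ball_of_disjoint_sphere hsphere continuous_one),
    inv_smul_smul₀ two_pi_I_ne_zero]

end ContinuousFunctionalCalculus

theorem IsStarProjection.eq_starProjection_ker {𝕜 E : Type*} [RCLike 𝕜]
    [NormedAddCommGroup E] [InnerProductSpace 𝕜 E] [CompleteSpace E] {P S K : E →L[𝕜] E}
    (hP : IsStarProjection P) (hSP : S * P = 0) (hKS : 1 - P = K * S) :
    P = (LinearMap.ker (S : E →ₗ[𝕜] E)).starProjection := by
  refine ContinuousLinearMap.IsStarProjection.ext hP isStarProjection_starProjection ?_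
  rw [Submodule.range_starProjection]
  ext v
  constructor
  · rintro ⟨w, rfl⟩
    exact congr($hSP w)
  · intro (hv : S v = 0)
    have hfix : v - P v = K (S v) := congr($hKS v)
    rw [hv, map_zero, sub_eq_zero] at hfix
    exact ⟨v, hfix.symm⟩

theorem cfc_ite_eq_eigenProjection {H : Type*} [NormedAddCommGroup H] [InnerProductSpace ℂ H]
    [CompleteSpace H] (T : H →L[ℂ] H) [IsStarNormal T] {μ : ℂ}
    (hμ : ¬AccPt μ (𝓟 (spectrum ℂ T))) :
    cfc (fun x => if x = μ then (1 : ℂ) else 0) T = eigenProjection T μ := by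
  set g : ℂ → ℂ := fun x => if x = μ then 1 else 0
  have hg : ContinuousOn g (spectrum ℂ T) := continuousOn_of_not_accPt hμ fun x _ hx =>
    continuousAt_const.congr ((eventually_ne_nhds hx).mono fun y hy => (if_neg hy).symm)
  have hk : ContinuousOn (fun x => (x - μ)⁻¹) (spectrum ℂ T) := continuousOn_of_not_accPt hμ
    fun x _ hx => (continuousAt_id.sub continuousAt_const).inv₀ (sub_ne_zero.mpr hx)
  have hTμ : cfc (fun x => x - μ) T = T - μ • 1 := by
    rw [cfc_sub _ _, cfc_id' ℂ T, cfc_const μ T, Algebra.algebraMap_eq_smul_one]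
  have hproj : IsStarProjection (cfc g T) := by
    refine ⟨?_, ?_⟩
    · rw [IsIdempotentElem, ← cfc_mul g g T hg hg]
      exact cfc_congr fun x _ => by by_cases h : x = μ <;> simp [g, h]
    · rw [IsSelfAdjoint, ← cfc_star]
      exact cfc_congr fun x _ => by by_cases h : x = μ <;> simp [g, h]
  have hker : (T - μ • 1) * cfc g T = 0 := by
    rw [← hTμ, ← cfc_mul _ g T (by fun_prop) hg, ← cfc_zero ℂ T]
    exact cfc_congr fun x _ => by by_cases h : x = μ <;> simp [g, h]
  -- `(0 : ℂ)⁻¹ = 0` makes this hold at `x = μ` as well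
  have hfactor : 1 - cfc g T = cfc (fun x => (x - μ)⁻¹) T * (T - μ • 1) := by
    rw [← hTμ, ← cfc_mul _ _ T hk, ← cfc_const_one ℂ T, ← cfc_sub _ g T continuousOn_const hg]
    refine cfc_congr fun x _ => ?_
    by_cases h : x = μ
    · simp [g, h]
    · simp [g, h, sub_ne_zero.mpr h]
  exact hproj.eq_starProjection_ker hker hfactor

/-- **Riesz projection formula.** If the spectrum of a self-adjoint bounded operator `T` meets
the closed disc of radius `δ` around `λ` only in `{λ}`, then `(2πi)⁻¹` times the circle
integral of the resolvent over the circle `|z - λ| = δ` is the orthogonal projection onto the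
eigenspace `ker (T - λ·1)`. -/
theorem riesz_projection_eq_orthogonalProjection
    {H : Type*} [NormedAddCommGroup H] [InnerProductSpace ℂ H] [CompleteSpace H]
    (T : H →L[ℂ] H) (hT : IsSelfAdjoint T) (l : ℝ) (δ : ℝ) (hδ : 0 < δ)
    (hspec : spectrum ℂ T ∩ Metric.closedBall (l : ℂ) δ ⊆ {(l : ℂ)}) :
    (2 * π * Complex.I)⁻¹ • (∮ z in C((l : ℂ), δ), resolvent T z)
      = eigenProjection T (l : ℂ) := by
  have : IsStarNormal T := hT.isStarNormal
  have hball : ∀ x ∈ spectrum ℂ T, x ∈ closedBall (l : ℂ) δ → x = l :=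
    fun x hx hxδ => hspec ⟨hx, hxδ⟩
  have hsphere : Disjoint (sphere (l : ℂ) δ) (spectrum ℂ T) := by
    refine disjoint_left.mpr fun x hx hxT => ?_
    rw [mem_sphere, hball x hxT (sphere_subset_closedBall hx), dist_self] at hx
    exact hδ.ne hx
  have hiso : ¬AccPt (l : ℂ) (𝓟 (spectrum ℂ T)) := fun hacc => by
    obtain ⟨x, ⟨hxδ, hxT⟩, hxl⟩ := accPt_iff_nhds.mp hacc _ (ball_mem_nhds _ hδ)
    exact hxl (hball x hxT (ball_subset_closedBall hxδ))
  rw [riesz_projection_eq_cfc_indicator hδ.le hsphere, ← cfc_ite_eq_eigenProjection T hiso]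
  refine cfc_congr fun x hx => ?_
  by_cases h : x = l
  · simp [h, hδ]
  · have hxδ : x ∉ ball (l : ℂ) δ := fun hxδ => h (hball x hx (ball_subset_closedBall hxδ))
    simp [h, hxδ]
end

section
/- Let A be a complex unital Banach algebra, λ ∈ ℂ and δ > 0. Then the set Ω = {a ∈ A : the spectrum of a is disjoint from the circle {z : |z − λ| = δ}} is open in A, and the map sending a ∈ Ω to (2πi)⁻¹ times the counterclockwise circle integral over |z − λ| = δ of the resolvent (z·1 − a)⁻¹ is continuous on Ω. -/
set_option maxHeartbeats 1000000

open scoped Real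

theorem aux_isOpen_U {A : Type*} [NormedRing A] [NormedAlgebra ℂ A] [CompleteSpace A] :
    IsOpen {p : A × ℂ | IsUnit (algebraMap ℂ A p.2 - p.1)} := by
  have hc : Continuous fun p : A × ℂ => algebraMap ℂ A p.2 - p.1 :=
    ((continuous_algebraMap ℂ A).comp continuous_snd).sub continuous_fst
  exact Units.isOpen.preimage hc

theorem aux_contOn {A : Type*} [NormedRing A] [NormedAlgebra ℂ A] [CompleteSpace A]
    (l : ℂ) (δ : ℝ) (hδ : 0 < δ) (u : Set A)
    (huv : ∀ x ∈ u, ∀ z ∈ Metric.sphere l δ, IsUnit (algebraMap ℂ A z - x)) :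
    ContinuousOn (fun a : A => ∮ z in C(l, δ), resolvent a z) u := by
  rw [continuousOn_iff_continuous_restrict]
  have hFc : Continuous (Function.uncurry fun (x : u) (θ : ℝ) =>
      deriv (circleMap l δ) θ • resolvent (x : A) (circleMap l δ θ)) := by
    rw [continuous_iff_continuousAt]
    rintro ⟨x, θ⟩
    have h1 : Continuous fun p : u × ℝ => algebraMap ℂ A (circleMap l δ p.2) - (p.1 : A) :=
      ((continuous_algebraMap ℂ A).comp
        ((continuous_circleMap l δ).comp continuous_snd)).sub
        (continuous_subtype_val.comp continuous_fst)
    have hunit : IsUnit (algebraMap ℂ A (circleMap l δ θ) - (x : A)) :=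
      huv x x.2 _ (circleMap_mem_sphere l hδ.le θ)
    have h2 : ContinuousAt Ring.inverse (algebraMap ℂ A (circleMap l δ θ) - (x : A)) := by
      simpa [hunit.unit_spec] using NormedRing.inverse_continuousAt hunit.unit
    have h3 : ContinuousAt (fun p : u × ℝ => resolvent ((p.1 : A)) (circleMap l δ p.2))
        (x, θ) := by
      simp only [resolvent]
      exact ContinuousAt.comp (x := (x, θ))
        (f := fun p : u × ℝ => algebraMap ℂ A (circleMap l δ p.2) - (p.1 : A))
        (g := Ring.inverse) h2 h1.continuousAt
    have h4 : ContinuousAt (fun p : u × ℝ => deriv (circleMap l δ) p.2) (x, θ) := by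
      simp only [deriv_circleMap]
      exact (((continuous_circleMap 0 δ).mul continuous_const).comp continuous_snd).continuousAt
    exact h4.smul h3
  exact intervalIntegral.continuous_parametric_intervalIntegral_of_continuous'
    (μ := MeasureTheory.volume) hFc 0 (2 * π)

/-- The set of elements of a complex unital Banach algebra whose spectrum avoids the circle
`|z - λ| = δ` is open, and on it the Riesz integral
`(2πi)⁻¹ ∮_{|z-λ|=δ} (z·1 - a)⁻¹ dz` depends continuously on `a`. -/
theorem isOpen_and_continuousOn_rieszIntegral
    {A : Type*} [NormedRing A] [NormedAlgebra ℂ A] [CompleteSpace A]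
    (l : ℂ) (δ : ℝ) (hδ : 0 < δ) :
    IsOpen {a : A | spectrum ℂ a ∩ Metric.sphere l δ = ∅} ∧
      ContinuousOn
        (fun a : A => (2 * π * Complex.I)⁻¹ • (∮ z in C(l, δ), resolvent a z))
        {a : A | spectrum ℂ a ∩ Metric.sphere l δ = ∅} := by
  set S := {a : A | spectrum ℂ a ∩ Metric.sphere l δ = ∅} with hSdef
  have hmem : ∀ a : A, a ∈ S ↔
      ∀ z ∈ Metric.sphere l δ, IsUnit (algebraMap ℂ A z - a) := by
    intro a
    simp only [hSdef, Set.mem_setOf_eq, Set.eq_empty_iff_forall_notMem, Set.mem_inter_iff,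
      not_and]
    constructor
    · intro h z hz
      exact spectrum.notMem_iff.mp fun hmem => h z hmem hz
    · intro h z hz hz'
      exact spectrum.notMem_iff.mpr (h z hz') hz
  have key : ∀ a ∈ S, ∃ u : Set A, IsOpen u ∧ a ∈ u ∧ u ⊆ S ∧
      ContinuousOn (fun a : A => ∮ z in C(l, δ), resolvent a z) u := by
    intro a ha
    obtain ⟨u, v, huo, _hvo, hau, hsv, huv⟩ :=
      generalized_tube_lemma isCompact_singleton (isCompact_sphere l δ)
        (aux_isOpen_U (A := A))
        (by
          rintro ⟨x, z⟩ ⟨hx, hz⟩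
          rw [Set.mem_singleton_iff] at hx
          subst hx
          exact (hmem a).mp ha z hz)
    have huv' : ∀ x ∈ u, ∀ z ∈ Metric.sphere l δ, IsUnit (algebraMap ℂ A z - x) :=
      fun x hx z hz => huv (Set.mk_mem_prod hx (hsv hz))
    have huS : u ⊆ S := fun b hb => (hmem b).mpr (huv' b hb)
    exact ⟨u, huo, hau rfl, huS, aux_contOn l δ hδ u huv'⟩
  constructor
  · rw [isOpen_iff_forall_mem_open]
    intro a ha
    obtain ⟨u, huo, hau, huS, _⟩ := key a ha
    exact ⟨u, huS, huo, hau⟩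
  · intro a ha
    obtain ⟨u, huo, hau, _, hcont⟩ := key a ha
    have : ContinuousAt (fun a : A => ∮ z in C(l, δ), resolvent a z) a :=
      hcont.continuousAt (huo.mem_nhds hau)
    exact (this.const_smul _).continuousWithinAt
end

section
/- Let H be a complex Hilbert space and let S and T be self-adjoint bounded linear operators on H. Then every point μ of the spectrum of S lies within distance ‖S − T‖ of the spectrum of T; that is, for every μ in the spectrum of S there exists ν in the spectrum of T with |μ − ν| ≤ ‖S − T‖. -/
/-- Every point of the spectrum of a self-adjoint operator `S` lies within distance
`‖S - T‖` of the spectrum of a self-adjoint operator `T`. -/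
theorem spectrum_dist_le_of_isSelfAdjoint
    {H : Type*} [NormedAddCommGroup H] [InnerProductSpace ℂ H] [CompleteSpace H]
    (S T : H →L[ℂ] H) (hS : IsSelfAdjoint S) (hT : IsSelfAdjoint T) :
    ∀ μ ∈ spectrum ℂ S, ∃ ν ∈ spectrum ℂ T, ‖μ - ν‖ ≤ ‖S - T‖ := by
  intro μ hμ
  by_contra hcon
  push_neg at hcon
  -- nontriviality
  have hnt : Nontrivial (H →L[ℂ] H) := by
    rcases subsingleton_or_nontrivial (H →L[ℂ] H) with h | h
    · exact absurd (isUnit_of_subsingleton _) (spectrum.mem_iff.mp hμ)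
    · exact h
  have hTne : (spectrum ℂ T).Nonempty := spectrum.nonempty T
  have hTc : IsCompact (spectrum ℂ T) := spectrum.isCompact T
  obtain ⟨ν₀, hν₀, hd⟩ := hTc.exists_infDist_eq_dist hTne μ
  set d := Metric.infDist μ (spectrum ℂ T) with hdd
  have hSTd : ‖S - T‖ < d := by
    rw [hd]
    simpa [dist_eq_norm] using hcon ν₀ hν₀
  have hd0 : 0 < d := lt_of_le_of_lt (norm_nonneg _) hSTd
  have hμT : μ ∉ spectrum ℂ T := fun h => by
    have := Metric.infDist_zero_of_mem h
    rw [← hdd] at this; linarith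
  -- resolvent via cfc
  have hTn : IsStarNormal T := hT.isStarNormal
  have hcont : ContinuousOn (fun x : ℂ => (μ - x)⁻¹) (spectrum ℂ T) := by
    apply ContinuousOn.inv₀
    · fun_prop
    · intro x hx hx0
      exact hμT (by rwa [sub_eq_zero.mp hx0])
  set R : H →L[ℂ] H := cfc (fun x : ℂ => (μ - x)⁻¹) T with hR
  have key : ∀ x ∈ spectrum ℂ T, (μ - x)⁻¹ * (μ - x) = 1 := by
    intro x hx
    refine inv_mul_cancel₀ (fun h => hμT ?_)
    rwa [sub_eq_zero.mp h]
  have hTμ : cfc (fun x : ℂ => μ - x) T = algebraMap ℂ (H →L[ℂ] H) μ - T := by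
    rw [cfc_sub _ _ T (by fun_prop) (by fun_prop), cfc_const μ T, cfc_id' ℂ T]
  have hmul : R * (algebraMap ℂ (H →L[ℂ] H) μ - T) = 1 := by
    rw [← hTμ, hR, ← cfc_mul _ _ T hcont (by fun_prop)]
    calc cfc (fun x : ℂ => (μ - x)⁻¹ * (μ - x)) T = cfc (fun _ : ℂ => (1 : ℂ)) T :=
          cfc_congr key
      _ = 1 := cfc_one ℂ T
  have hmul' : (algebraMap ℂ (H →L[ℂ] H) μ - T) * R = 1 := by
    rw [← hTμ, hR, ← cfc_mul _ _ T (by fun_prop) hcont]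
    calc cfc (fun x : ℂ => (μ - x) * (μ - x)⁻¹) T = cfc (fun _ : ℂ => (1 : ℂ)) T :=
          cfc_congr (fun x hx => by rw [mul_comm]; exact key x hx)
      _ = 1 := cfc_one ℂ T
  set u : (H →L[ℂ] H)ˣ := ⟨algebraMap ℂ (H →L[ℂ] H) μ - T, R, hmul', hmul⟩ with hu
  have hRnorm : ‖R‖ ≤ d⁻¹ := by
    apply norm_cfc_le (by positivity)
    intro x hx
    rw [norm_inv]
    refine inv_anti₀ hd0 ?_
    have := Metric.infDist_le_dist_of_mem (x := μ) hx
    rw [← hdd] at this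
    simpa [dist_eq_norm] using this
  have hR0 : 0 < ‖R‖ := by
    rcases (norm_nonneg R).lt_or_eq with h | h
    · exact h
    · exfalso
      have : R = 0 := by rwa [eq_comm, norm_eq_zero] at h
      rw [this, zero_mul] at hmul
      exact one_ne_zero hmul.symm
  have hperturb : ‖-(S - T)‖ < ‖(↑u⁻¹ : H →L[ℂ] H)‖⁻¹ := by
    have : ‖(↑u⁻¹ : H →L[ℂ] H)‖ = ‖R‖ := rfl
    rw [norm_neg, this]
    calc ‖S - T‖ < d := hSTd
      _ = (d⁻¹)⁻¹ := by rw [inv_inv]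
      _ ≤ ‖R‖⁻¹ := by
          apply inv_anti₀ hR0 hRnorm
  have hunit : IsUnit (algebraMap ℂ (H →L[ℂ] H) μ - S) := by
    have := (u.add (-(S - T)) hperturb).isUnit
    convert this using 1
    show _ = (algebraMap ℂ (H →L[ℂ] H) μ - T) + -(S - T)
    abel
  exact (spectrum.mem_iff.mp hμ) hunit
end

section
/- Let S be a nonempty closed subset of ℝ that is discrete (every point of S is isolated in S), unbounded above and unbounded below, and let m : ℝ → ℕ satisfy m(λ) ≥ 1 for every λ ∈ S. If e : ℤ → ℝ and f : ℤ → ℝ are both enumerations of (S, m), then there exists an integer N such that e(n) = f(n + N) for all n ∈ ℤ. -/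
/-- An enumeration of a set `S ⊆ ℝ` with multiplicity function `m` : a monotone nondecreasing
function `e : ℤ → ℝ` whose image is exactly `S` and which attains each `λ ∈ S` exactly
`m λ` times. -/
def IsEnumeration (S : Set ℝ) (m : ℝ → ℕ) (e : ℤ → ℝ) : Prop :=
  Monotone e ∧ Set.range e = S ∧
    ∀ l ∈ S, (e ⁻¹' {l}).Finite ∧ (e ⁻¹' {l}).ncard = m l

/-- Existence of a "first index with value `≥ c`" function, Galois-connected to `e`. -/
private lemma enum_exists_T (S : Set ℝ) (m : ℝ → ℕ) (e : ℤ → ℝ)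
    (he : IsEnumeration S m e) (habove : ¬ BddAbove S) (hbelow : ¬ BddBelow S) :
    ∃ T : ℝ → ℤ, ∀ c k, T c ≤ k ↔ c ≤ e k := by
  obtain ⟨hmono, hr, -⟩ := he
  have h : ∀ c : ℝ, ∃ t : ℤ, c ≤ e t ∧ ∀ k, c ≤ e k → t ≤ k := by
    intro c
    obtain ⟨s, hs, hcs⟩ := not_bddAbove_iff.1 habove c
    obtain ⟨u, hu, huc⟩ := not_bddBelow_iff.1 hbelow c
    rw [← hr] at hs hu
    obtain ⟨k0, hk0⟩ := hs
    obtain ⟨j, hj⟩ := hu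
    have Hinh : ∃ z : ℤ, c ≤ e z := ⟨k0, by rw [hk0]; exact hcs.le⟩
    have Hbdd : ∃ b : ℤ, ∀ z : ℤ, c ≤ e z → b ≤ z := by
      refine ⟨j, fun z hz => ?_⟩
      by_contra h'
      push_neg at h'
      have := hmono h'.le
      rw [hj] at this
      linarith
    obtain ⟨t, ht1, ht2⟩ := Int.exists_least_of_bdd Hbdd Hinh
    exact ⟨t, ht1, ht2⟩
  choose T hT1 hT2 using h
  exact ⟨T, fun c k => ⟨fun h' => le_trans (hT1 c) (hmono h'), fun h' => hT2 c k h'⟩⟩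

/-- The fiber of an enumeration over `l ∈ S` is the interval `[T l, T l + m l)`. -/
private lemma enum_fiber_eq (S : Set ℝ) (m : ℝ → ℕ) (e : ℤ → ℝ)
    (he : IsEnumeration S m e) (T : ℝ → ℤ) (hT : ∀ c k, T c ≤ k ↔ c ≤ e k)
    {l : ℝ} (hl : l ∈ S) : e ⁻¹' {l} = Set.Ico (T l) (T l + m l) := by
  obtain ⟨hmono, hr, hfib⟩ := he
  obtain ⟨hfin, hcard⟩ := hfib l hl
  obtain ⟨k0, hk0⟩ : ∃ k0, e k0 = l := by rw [← hr] at hl; exact hl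
  have heTl : e (T l) = l := by
    have h1 : l ≤ e (T l) := (hT l (T l)).1 le_rfl
    have h2 : T l ≤ k0 := (hT l k0).2 (le_of_eq hk0.symm)
    have := hmono h2
    rw [hk0] at this
    linarith
  have hTl_mem : T l ∈ e ⁻¹' {l} := heTl
  have hlb : ∀ k ∈ e ⁻¹' {l}, T l ≤ k := fun k hk => (hT l k).2 (le_of_eq hk.symm)
  set F := hfin.toFinset with hF
  have hFne : F.Nonempty := ⟨T l, hfin.mem_toFinset.2 hTl_mem⟩
  set b := F.max' hFne with hb
  have hbmem : e b = l := by
    have hbF : b ∈ F := F.max'_mem hFne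
    exact hfin.mem_toFinset.1 hbF
  have hfiber_eq : e ⁻¹' {l} = Set.Icc (T l) b := by
    apply Set.Subset.antisymm
    · intro k hk
      exact ⟨hlb k hk, F.le_max' k (hfin.mem_toFinset.2 hk)⟩
    · intro k hk
      have h1 := hmono hk.1
      have h2 := hmono hk.2
      rw [heTl] at h1
      rw [hbmem] at h2
      exact le_antisymm h2 h1
  have hTlb : T l ≤ b := hlb b hbmem
  have hcard' : (b + 1 - T l).toNat = m l := by
    rw [hfiber_eq, ← Finset.coe_Icc, Set.ncard_coe_finset, Int.card_Icc] at hcard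
    exact hcard
  have hbeq : b = T l + m l - 1 := by omega
  rw [hfiber_eq, hbeq]
  ext k
  simp only [Set.mem_Icc, Set.mem_Ico]
  omega

/-- **Uniqueness of enumerations up to translation.** Any two enumerations of a nonempty,
closed, discrete subset of `ℝ` which is unbounded above and below, with positive multiplicity
function, differ by a translation by an integer. -/
theorem isEnumeration_unique_up_to_translation
    (S : Set ℝ) (hne : S.Nonempty) (hclosed : IsClosed S)
    (hdisc : ∀ x ∈ S, ∃ ε > 0, S ∩ Metric.ball x ε = {x})
    (habove : ¬ BddAbove S) (hbelow : ¬ BddBelow S)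
    (m : ℝ → ℕ) (hm : ∀ l ∈ S, 1 ≤ m l)
    (e f : ℤ → ℝ) (he : IsEnumeration S m e) (hf : IsEnumeration S m f) :
    ∃ N : ℤ, ∀ n : ℤ, e n = f (n + N) := by
  classical
  obtain ⟨Te, hTe⟩ := enum_exists_T S m e he habove hbelow
  obtain ⟨Tf, hTf⟩ := enum_exists_T S m f hf habove hbelow
  have hrange_e := he.2.1
  have hrange_f := hf.2.1
  -- key counting identity: Te b - Te a = Tf b - Tf a for a ≤ b
  have key : ∀ g : ℤ → ℝ, ∀ T : ℝ → ℤ, IsEnumeration S m g → (∀ c k, T c ≤ k ↔ c ≤ g k) →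
      ∀ a b : ℝ, a ≤ b → ∀ (hFin : (S ∩ Set.Ico a b).Finite),
      (T b - T a).toNat = ∑ l ∈ hFin.toFinset, m l := by
    intro g T hg hT a b hab hFin
    have hrange := hg.2.1
    have hmemF : ∀ l, l ∈ hFin.toFinset ↔ l ∈ S ∧ a ≤ l ∧ l < b := by
      intro l
      rw [Set.Finite.mem_toFinset]
      simp only [Set.mem_inter_iff, Set.mem_Ico]
    have hfibmem : ∀ l ∈ S, ∀ k : ℤ, k ∈ Finset.Ico (T l) (T l + (m l : ℤ)) ↔ g k = l := by
      intro l hl k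
      rw [Finset.mem_Ico]
      have := enum_fiber_eq S m g hg T hT hl
      have h2 : k ∈ g ⁻¹' {l} ↔ k ∈ Set.Ico (T l) (T l + (m l : ℤ)) := by rw [this]
      simpa [Set.mem_Ico] using h2.symm
    have hunion : Finset.Ico (T a) (T b) =
        hFin.toFinset.biUnion (fun l => Finset.Ico (T l) (T l + (m l : ℤ))) := by
      ext k
      rw [Finset.mem_biUnion, Finset.mem_Ico]
      constructor
      · rintro ⟨h1, h2⟩
        have ha : a ≤ g k := (hT a k).1 h1
        have hb2 : g k < b := by
          by_contra h'
          push_neg at h'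
          exact absurd ((hT b k).2 h') (not_le.2 h2)
        have hgS : g k ∈ S := by rw [← hrange]; exact ⟨k, rfl⟩
        refine ⟨g k, (hmemF _).2 ⟨hgS, ha, hb2⟩, ?_⟩
        exact (hfibmem _ hgS k).2 rfl
      · rintro ⟨l, hlF, hk⟩
        obtain ⟨hlS, hal, hlb⟩ := (hmemF l).1 hlF
        have hgk : g k = l := (hfibmem l hlS k).1 hk
        constructor
        · exact (hT a k).2 (by rw [hgk]; exact hal)
        · by_contra h'
          push_neg at h'
          have := (hT b k).1 h'
          rw [hgk] at this
          linarith
    have hdisj : ∀ l1 ∈ hFin.toFinset, ∀ l2 ∈ hFin.toFinset, l1 ≠ l2 →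
        Disjoint (Finset.Ico (T l1) (T l1 + (m l1 : ℤ))) (Finset.Ico (T l2) (T l2 + (m l2 : ℤ))) := by
      intro l1 h1 l2 h2 hne12
      obtain ⟨h1S, -⟩ := (hmemF l1).1 h1
      obtain ⟨h2S, -⟩ := (hmemF l2).1 h2
      rw [Finset.disjoint_left]
      intro k hk1 hk2
      have e1 := (hfibmem l1 h1S k).1 hk1
      have e2 := (hfibmem l2 h2S k).1 hk2
      exact hne12 (e1 ▸ e2 ▸ rfl)
    calc (T b - T a).toNat = (Finset.Ico (T a) (T b)).card := (Int.card_Ico _ _).symm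
      _ = ∑ l ∈ hFin.toFinset, (Finset.Ico (T l) (T l + (m l : ℤ))).card := by
          rw [hunion]; exact Finset.card_biUnion hdisj
      _ = ∑ l ∈ hFin.toFinset, m l := by
          apply Finset.sum_congr rfl
          intro l _
          rw [Int.card_Ico]
          omega
  -- the sets S ∩ Ico a b are finite
  have hFinAll : ∀ a b : ℝ, (S ∩ Set.Ico a b).Finite := by
    intro a b
    have hpre : e ⁻¹' (Set.Ico a b) = Set.Ico (Te a) (Te b) := by
      ext k
      simp only [Set.mem_preimage, Set.mem_Ico]
      constructor
      · rintro ⟨h1, h2⟩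
        refine ⟨(hTe a k).2 h1, ?_⟩
        by_contra h'
        push_neg at h'
        exact absurd ((hTe b k).1 h') (not_le.2 h2)
      · rintro ⟨h1, h2⟩
        refine ⟨(hTe a k).1 h1, ?_⟩
        by_contra h'
        push_neg at h'
        exact absurd ((hTe b k).2 h') (not_le.2 h2)
    have himg : e '' (e ⁻¹' (Set.Ico a b)) = Set.Ico a b ∩ Set.range e :=
      Set.image_preimage_eq_inter_range
    have : S ∩ Set.Ico a b = e '' (e ⁻¹' (Set.Ico a b)) := by
      rw [himg, hrange_e, Set.inter_comm]
    rw [this, hpre]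
    exact (Set.finite_Ico _ _).image e
  -- monotonicity of T
  have hTmono : ∀ g : ℤ → ℝ, ∀ T : ℝ → ℤ, (∀ c k, T c ≤ k ↔ c ≤ g k) →
      ∀ a b : ℝ, a ≤ b → T a ≤ T b := by
    intro g T hT a b hab
    exact (hT a (T b)).2 (le_trans hab ((hT b (T b)).1 le_rfl))
  have hdiff : ∀ a b : ℝ, a ≤ b → Te b - Te a = Tf b - Tf a := by
    intro a b hab
    have h1 := key e Te he hTe a b hab (hFinAll a b)
    have h2 := key f Tf hf hTf a b hab (hFinAll a b)
    have h3 : (Te b - Te a).toNat = (Tf b - Tf a).toNat := by rw [h1, h2]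
    have h4 := hTmono e Te hTe a b hab
    have h5 := hTmono f Tf hTf a b hab
    omega
  -- define N
  set c0 := e 0 with hc0
  refine ⟨Tf c0 - Te c0, fun n => ?_⟩
  have hTshift : ∀ c : ℝ, Tf c = Te c + (Tf c0 - Te c0) := by
    intro c
    rcases le_total c c0 with h | h
    · have := hdiff c c0 h
      omega
    · have := hdiff c0 c h
      omega
  set l := e n with hl
  have hlS : l ∈ S := by rw [← hrange_e]; exact ⟨n, rfl⟩
  have hfe := enum_fiber_eq S m e he Te hTe hlS
  have hff := enum_fiber_eq S m f hf Tf hTf hlS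
  have hn_mem : n ∈ Set.Ico (Te l) (Te l + (m l : ℤ)) := by
    rw [← hfe]; exact rfl
  have hn2 : n + (Tf c0 - Te c0) ∈ f ⁻¹' {l} := by
    rw [hff, hTshift l]
    simp only [Set.mem_Ico] at hn_mem ⊢
    omega
  exact hn2.symm
end

section
/- Let S be a nonempty closed subset of ℝ that is discrete (every point of S is isolated in S), unbounded above and unbounded below, and let m : ℝ → ℕ satisfy m(λ) ≥ 1 for every λ ∈ S. Let e and f be two enumerations of (S, m). If there exists an integer N with e(N) = f(N), e(N + 1) > e(N), and f(N + 1) > f(N), then e = f. -/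
/-- A monotone function on `ℤ` has no value of its range strictly between two
consecutive values. -/
lemma enum_not_between {f : ℤ → ℝ} (hf : Monotone f) {a : ℤ} {x : ℝ}
    (hx : x ∈ Set.range f) (h1 : f a < x) (h2 : x < f (a + 1)) : False := by
  obtain ⟨k, rfl⟩ := hx
  have hk1 : a < k := by
    by_contra h
    push_neg at h
    exact absurd (hf h) (not_le.2 h1)
  have hk2 : k < a + 1 := by
    by_contra h
    push_neg at h
    exact absurd (hf h) (not_le.2 h2)
  omega

/-- The block of indices with value `e (N+1)`, when there is a jump at `N`, is the
interval of integers starting at `N+1` of length the multiplicity. -/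
lemma enum_block_right {e : ℤ → ℝ} (hmono : Monotone e) {N : ℤ}
    (hjump : e N < e (N + 1)) (hfin : (e ⁻¹' {e (N + 1)}).Finite) :
    e ⁻¹' {e (N + 1)} = Set.Icc (N + 1) (N + (e ⁻¹' {e (N + 1)}).ncard) := by
  obtain ⟨b, hbP, hbmax⟩ := Set.exists_max_image _ id hfin ⟨N + 1, rfl⟩
  have hbP' : e b = e (N + 1) := hbP
  have hIcc : e ⁻¹' {e (N + 1)} = Set.Icc (N + 1) b := by
    ext k
    constructor
    · intro hk
      have hk' : e k = e (N + 1) := hk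
      refine ⟨?_, hbmax k hk⟩
      by_contra h
      push_neg at h
      have : e k ≤ e N := hmono (by omega)
      rw [hk'] at this
      exact absurd this (not_le.2 hjump)
    · rintro ⟨h1, h2⟩
      have l1 : e (N + 1) ≤ e k := hmono h1
      have l2 : e k ≤ e (N + 1) := hbP' ▸ hmono h2
      exact le_antisymm l2 l1
  have hb1 : N + 1 ≤ b := by have := hbmax (N + 1) rfl; simpa using this
  have hcard : (e ⁻¹' {e (N + 1)}).ncard = (b - N).toNat := by
    rw [hIcc, ← Finset.coe_Icc, Set.ncard_coe_finset, Int.card_Icc]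
    congr 1
    omega
  rw [hcard, hIcc]
  have : N + (((b - N).toNat : ℕ) : ℤ) = b := by omega
  rw [this]

/-- The block of indices with value `e N`, when there is a jump at `N`, is the
interval of integers ending at `N` of length the multiplicity. -/
lemma enum_block_left {e : ℤ → ℝ} (hmono : Monotone e) {N : ℤ}
    (hjump : e N < e (N + 1)) (hfin : (e ⁻¹' {e N}).Finite) :
    e ⁻¹' {e N} = Set.Icc (N + 1 - (e ⁻¹' {e N}).ncard) N := by
  obtain ⟨a, haP, hamin⟩ := Set.exists_min_image _ id hfin ⟨N, rfl⟩
  have haP' : e a = e N := haP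
  have hIcc : e ⁻¹' {e N} = Set.Icc a N := by
    ext k
    constructor
    · intro hk
      have hk' : e k = e N := hk
      refine ⟨hamin k hk, ?_⟩
      by_contra h
      push_neg at h
      have : e (N + 1) ≤ e k := hmono (by omega)
      rw [hk'] at this
      exact absurd this (not_le.2 hjump)
    · rintro ⟨h1, h2⟩
      have l1 : e a ≤ e k := hmono h1
      have l2 : e k ≤ e N := hmono h2
      rw [haP'] at l1
      exact le_antisymm l2 l1
  have ha1 : a ≤ N := by have := hamin N rfl; simpa using this
  have hcard : (e ⁻¹' {e N}).ncard = (N + 1 - a).toNat := by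
    rw [hIcc, ← Finset.coe_Icc, Set.ncard_coe_finset, Int.card_Icc]
  rw [hcard, hIcc]
  have : N + 1 - (((N + 1 - a).toNat : ℕ) : ℤ) = a := by omega
  rw [this]

/-- **Rigidity of enumerations.** If two enumerations of a nonempty, closed, discrete,
two-sided unbounded subset of `ℝ` (with positive multiplicity function) agree at an integer
`N` at which both jump, i.e. `e N = f N`, `e (N+1) > e N` and `f (N+1) > f N`, then they
coincide. -/
theorem isEnumeration_eq_of_eq_of_jump
    (S : Set ℝ) (hne : S.Nonempty) (hclosed : IsClosed S)
    (hdisc : ∀ x ∈ S, ∃ ε > 0, S ∩ Metric.ball x ε = {x})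
    (habove : ¬ BddAbove S) (hbelow : ¬ BddBelow S)
    (m : ℝ → ℕ) (hm : ∀ l ∈ S, 1 ≤ m l)
    (e f : ℤ → ℝ) (he : IsEnumeration S m e) (hf : IsEnumeration S m f)
    (N : ℤ) (hN : e N = f N) (heN : e N < e (N + 1)) (hfN : f N < f (N + 1)) :
    e = f := by
  obtain ⟨emono, erange, ecard⟩ := he
  obtain ⟨fmono, frange, fcard⟩ := hf
  have heS : ∀ k : ℤ, e k ∈ S := fun k => erange ▸ Set.mem_range_self k
  have hfS : ∀ k : ℤ, f k ∈ S := fun k => frange ▸ Set.mem_range_self k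
  have herange : Set.range e = Set.range f := by rw [erange, frange]
  -- successor equality: at a common jump, the next values agree
  have succ_eq : ∀ M : ℤ, e M = f M → e M < e (M + 1) → f M < f (M + 1) →
      e (M + 1) = f (M + 1) := by
    intro M hM heM hfM
    rcases lt_trichotomy (e (M + 1)) (f (M + 1)) with h | h | h
    · exfalso
      refine enum_not_between fmono (x := e (M + 1)) ?_ ?_ h
      · rw [← herange]; exact Set.mem_range_self _
      · rw [← hM]; exact heM
    · exact h
    · exfalso
      refine enum_not_between emono (x := f (M + 1)) ?_ ?_ h
      · rw [herange]; exact Set.mem_range_self _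
      · rw [hM]; exact hfM
  -- the inductive invariant propagated upward
  have up : ∀ i : ℕ, ∃ N' : ℤ, N + i ≤ N' ∧ (∀ k, N ≤ k → k ≤ N' → e k = f k) ∧
      e N' = f N' ∧ e N' < e (N' + 1) ∧ f N' < f (N' + 1) := by
    intro i
    induction i with
    | zero =>
      refine ⟨N, by omega, ?_, hN, heN, hfN⟩
      intro k h1 h2
      have : k = N := le_antisymm h2 h1
      rw [this]; exact hN
    | succ n ih =>
      obtain ⟨N', hN'ge, hagree, hN', heN', hfN'⟩ := ih
      have hsucc : e (N' + 1) = f (N' + 1) := succ_eq N' hN' heN' hfN'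
      set μ := e (N' + 1) with hμ
      set M : ℕ := m μ with hM
      have heblk := enum_block_right emono heN' (ecard μ (heS _)).1
      rw [(ecard μ (heS _)).2] at heblk
      have hfblk := enum_block_right fmono hfN' (fcard (f (N' + 1)) (hfS _)).1
      rw [(fcard (f (N' + 1)) (hfS _)).2, ← hsucc] at hfblk
      have hM1 : 1 ≤ M := hm μ (heS _)
      refine ⟨N' + M, by omega, ?_, ?_, ?_, ?_⟩
      · intro k h1 h2
        rcases le_or_gt k N' with h | h
        · exact hagree k h1 h
        · have hke : k ∈ e ⁻¹' {μ} := by rw [heblk]; constructor <;> omega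
          have hkf : k ∈ f ⁻¹' {μ} := by rw [hfblk]; constructor <;> omega
          have h1' : e k = μ := hke
          have h2' : f k = μ := hkf
          rw [h1', h2']
      · have hke : (N' + M : ℤ) ∈ e ⁻¹' {μ} := by rw [heblk]; constructor <;> omega
        have hkf : (N' + M : ℤ) ∈ f ⁻¹' {μ} := by rw [hfblk]; constructor <;> omega
        have h1' : e (N' + M) = μ := hke
        have h2' : f (N' + M) = μ := hkf
        rw [h1', h2']
      · have hke : (N' + M : ℤ) ∈ e ⁻¹' {μ} := by rw [heblk]; constructor <;> omega
        have h1' : e (N' + M) = μ := hke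
        have hkn : (N' + M + 1 : ℤ) ∉ e ⁻¹' {μ} := by rw [heblk]; simp only [Set.mem_Icc]; omega
        have hne' : e (N' + M + 1) ≠ μ := hkn
        have hle : e (N' + M) ≤ e (N' + M + 1) := emono (by omega)
        rw [h1'] at hle ⊢
        exact lt_of_le_of_ne hle (fun h => hne' h.symm)
      · have hkf : (N' + M : ℤ) ∈ f ⁻¹' {μ} := by rw [hfblk]; constructor <;> omega
        have h1' : f (N' + M) = μ := hkf
        have hkn : (N' + M + 1 : ℤ) ∉ f ⁻¹' {μ} := by rw [hfblk]; simp only [Set.mem_Icc]; omega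
        have hne' : f (N' + M + 1) ≠ μ := hkn
        have hle : f (N' + M) ≤ f (N' + M + 1) := fmono (by omega)
        rw [h1'] at hle ⊢
        exact lt_of_le_of_ne hle (fun h => hne' h.symm)
  -- the inductive invariant propagated downward
  have down : ∀ i : ℕ, ∃ N' : ℤ, N' ≤ N - i ∧ (∀ k, N' ≤ k → k ≤ N → e k = f k) ∧
      e N' = f N' ∧ e N' < e (N' + 1) ∧ f N' < f (N' + 1) := by
    intro i
    induction i with
    | zero =>
      refine ⟨N, by omega, ?_, hN, heN, hfN⟩
      intro k h1 h2
      have : k = N := le_antisymm h2 h1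
      rw [this]; exact hN
    | succ n ih =>
      obtain ⟨N', hN'le, hagree, hN', heN', hfN'⟩ := ih
      set μ := e N' with hμ
      set M : ℕ := m μ with hM
      have heblk := enum_block_left emono heN' (ecard μ (heS _)).1
      rw [(ecard μ (heS _)).2] at heblk
      have hfblk := enum_block_left fmono hfN' (fcard (f N') (hfS _)).1
      rw [(fcard (f N') (hfS _)).2, ← hN'] at hfblk
      have hM1 : 1 ≤ M := hm μ (heS _)
      have heμ : ∀ k : ℤ, N' + 1 - M ≤ k → k ≤ N' → e k = μ := by
        intro k h1 h2
        have : k ∈ e ⁻¹' {μ} := by rw [heblk]; exact ⟨h1, h2⟩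
        exact this
      have hfμ : ∀ k : ℤ, N' + 1 - M ≤ k → k ≤ N' → f k = μ := by
        intro k h1 h2
        have : k ∈ f ⁻¹' {μ} := by rw [hfblk]; exact ⟨h1, h2⟩
        exact this
      -- jump at N' - M for e
      have hejump : e (N' - M) < e (N' - M + 1) := by
        have h1' : e (N' - M + 1) = μ := heμ _ (by omega) (by omega)
        have hkn : (N' - M : ℤ) ∉ e ⁻¹' {μ} := by rw [heblk]; simp only [Set.mem_Icc]; omega
        have hne' : e (N' - M) ≠ μ := hkn
        have hle : e (N' - M) ≤ e (N' - M + 1) := emono (by omega)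
        rw [h1'] at hle ⊢
        exact lt_of_le_of_ne hle hne'
      have hfjump : f (N' - M) < f (N' - M + 1) := by
        have h1' : f (N' - M + 1) = μ := hfμ _ (by omega) (by omega)
        have hkn : (N' - M : ℤ) ∉ f ⁻¹' {μ} := by rw [hfblk]; simp only [Set.mem_Icc]; omega
        have hne' : f (N' - M) ≠ μ := hkn
        have hle : f (N' - M) ≤ f (N' - M + 1) := fmono (by omega)
        rw [h1'] at hle ⊢
        exact lt_of_le_of_ne hle hne'
      -- predecessor equality
      have hpred : e (N' - M) = f (N' - M) := by
        have he1 : e (N' - M + 1) = μ := heμ _ (by omega) (by omega)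
        have hf1 : f (N' - M + 1) = μ := hfμ _ (by omega) (by omega)
        rcases lt_trichotomy (e (N' - M)) (f (N' - M)) with h | h | h
        · exfalso
          refine enum_not_between emono (x := f (N' - M)) ?_ h ?_
          · rw [herange]; exact Set.mem_range_self _
          · rw [he1, ← hf1]
            exact hfjump
        · exact h
        · exfalso
          refine enum_not_between fmono (x := e (N' - M)) ?_ h ?_
          · rw [← herange]; exact Set.mem_range_self _
          · rw [hf1, ← he1]
            exact hejump
      refine ⟨N' - M, by omega, ?_, hpred, hejump, hfjump⟩
      intro k h1 h2
      rcases le_or_gt k (N' - M) with h | h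
      · have : k = N' - M := le_antisymm h h1
        rw [this]; exact hpred
      · rcases le_or_gt k N' with h' | h'
        · rw [heμ k (by omega) h', hfμ k (by omega) h']
        · exact hagree k (by omega) h2
  funext k
  rcases le_or_gt N k with h | h
  · obtain ⟨N', hge, hagree, _⟩ := up (k - N).toNat
    exact hagree k h (by omega)
  · obtain ⟨N', hle, hagree, _⟩ := down (N - k).toNat
    exact hagree k (by omega) (by omega)
end

section
/- Let X be a topological space, H a complex Hilbert space, and T : X → B(H) a norm-continuous family such that T(x) is self-adjoint for every x ∈ X. Let σ : X → ℝ be a continuous function such that σ(x) does not belong to the spectrum of T(x) for any x ∈ X. For each x let P(x) = f(T(x)) (continuous functional calculus), where f : ℝ → ℝ is any continuous function equal to 1 on spectrum(T(x)) ∩ (σ(x), ∞) and equal to 0 on spectrum(T(x)) ∩ (−∞, σ(x)); P(x) is independent of the choice of such f and is the spectral projection of T(x) for the part of the spectrum above σ(x). Then the map x ↦ P(x) is norm-continuous on X. -/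
open Topology Filter

open Polynomial in
/-- For a fixed continuous `g : ℝ → ℝ`, the map `x ↦ cfc g (T x)` is norm-continuous
whenever `T` is a norm-continuous family of self-adjoint operators. -/
lemma continuous_cfc_comp_aux
    {X : Type*} [TopologicalSpace X]
    {H : Type*} [NormedAddCommGroup H] [InnerProductSpace ℂ H] [CompleteSpace H]
    (g : ℝ → ℝ) (hg : Continuous g)
    (T : X → H →L[ℂ] H) (hT : Continuous T) (hsa : ∀ x, IsSelfAdjoint (T x)) :
    Continuous fun x => cfc g (T x) := by
  rw [continuous_iff_continuousAt]
  intro x₀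
  rw [ContinuousAt, Metric.tendsto_nhds]
  intro ε hε
  set M : ℝ := ‖T x₀‖ + 1 with hM
  obtain ⟨p, hp⟩ := exists_polynomial_near_of_continuousOn (-M) M g hg.continuousOn
    (ε / 3) (by positivity)
  have hspec : ∀ y : H →L[ℂ] H, ‖y‖ ≤ M → spectrum ℝ y ⊆ Set.Icc (-M) M := by
    intro y hy t ht
    have h1 := spectrum.subset_closedBall_norm_mul (𝕜 := ℝ) y ht
    rw [Metric.mem_closedBall, Real.dist_eq, sub_zero] at h1
    have h2 : ‖(1 : H →L[ℂ] H)‖ ≤ 1 := ContinuousLinearMap.norm_id_le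
    have h3 : |t| ≤ M := by nlinarith [norm_nonneg y, norm_nonneg (1 : H →L[ℂ] H)]
    exact abs_le.mp h3
  have key : ∀ y : H →L[ℂ] H, IsSelfAdjoint y → ‖y‖ ≤ M →
      ‖cfc g y - aeval y p‖ ≤ ε / 3 := by
    intro y hy hyM
    rw [← cfc_polynomial p y, ← cfc_sub _ _ y]
    apply norm_cfc_le (by positivity)
    intro t ht
    have := hp t (hspec y hyM ht)
    rw [Real.norm_eq_abs, abs_sub_comm]
    linarith
  have hnorm : ∀ᶠ x in 𝓝 x₀, ‖T x‖ ≤ M := by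
    have : ∀ᶠ x in 𝓝 x₀, ‖T x‖ < M :=
      (hT.norm.continuousAt (x := x₀)).eventually_lt (continuousAt_const (y := M))
        (by simp [hM])
    filter_upwards [this] with x hx using hx.le
  have haeval : ∀ᶠ x in 𝓝 x₀, ‖aeval (T x) p - aeval (T x₀) p‖ < ε / 3 := by
    have h := ((p.continuous_aeval.comp hT).continuousAt (x := x₀))
    rw [ContinuousAt, Metric.tendsto_nhds] at h
    filter_upwards [h (ε / 3) (by positivity)] with x hx
    rwa [dist_eq_norm] at hx
  filter_upwards [hnorm, haeval] with x h1 h2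
  rw [dist_eq_norm]
  have k1 := key (T x) (hsa x) h1
  have k2 := key (T x₀) (hsa x₀) (by simp [hM])
  calc ‖cfc g (T x) - cfc g (T x₀)‖
      ≤ ‖cfc g (T x) - aeval (T x) p‖ + ‖aeval (T x) p - aeval (T x₀) p‖ +
        ‖aeval (T x₀) p - cfc g (T x₀)‖ := by
        have := dist_triangle4 (cfc g (T x)) (aeval (T x) p) (aeval (T x₀) p) (cfc g (T x₀))
        simpa [dist_eq_norm] using this
    _ < ε := by
        rw [norm_sub_rev (aeval (T x₀) p)] at *
        linarith

/-- **Norm continuity of spectral projections across a continuous spectral gap.** Let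
`T : X → B(H)` be a norm-continuous family of self-adjoint operators and `σ : X → ℝ` a
continuous function with `σ(x)` never in the spectrum of `T(x)`. If `P(x) = f(T(x))` for
(any) continuous `f : ℝ → ℝ` equal to `1` on `spectrum(T(x)) ∩ (σ(x), ∞)` and `0` on
`spectrum(T(x)) ∩ (-∞, σ(x))`, then `x ↦ P(x)` is norm-continuous. -/
theorem spectralProjection_above_gap_continuous
    {X : Type*} [TopologicalSpace X]
    {H : Type*} [NormedAddCommGroup H] [InnerProductSpace ℂ H] [CompleteSpace H]
    (T : X → H →L[ℂ] H) (hT : Continuous T) (hsa : ∀ x, IsSelfAdjoint (T x))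
    (σ : X → ℝ) (hσ : Continuous σ) (hgap : ∀ x, σ x ∉ spectrum ℝ (T x))
    (P : X → H →L[ℂ] H)
    (hP : ∀ x, ∃ f : ℝ → ℝ, Continuous f ∧
      (∀ t ∈ spectrum ℝ (T x), σ x < t → f t = 1) ∧
      (∀ t ∈ spectrum ℝ (T x), t < σ x → f t = 0) ∧
      P x = cfc f (T x)) :
    Continuous P := by
  rw [continuous_iff_continuousAt]
  intro x₀
  -- find the size of the spectral gap at `x₀`
  obtain ⟨r, hr, hball⟩ := Metric.isOpen_iff.mp
    ((spectrum.isClosed (𝕜 := ℝ) (T x₀)).isOpen_compl) (σ x₀) (hgap x₀)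
  set δ : ℝ := r / 3 with hδ
  have hδpos : 0 < δ := by positivity
  have hS : ∀ t ∈ spectrum ℝ (T x₀), 3 * δ ≤ |t - σ x₀| := by
    intro t ht
    by_contra h
    push_neg at h
    exact hball (by rw [Metric.mem_ball, Real.dist_eq]; linarith) ht
  -- stability of the gap: points within `δ` of `σ x₀` stay out of nearby spectra
  have claim : ∀ x : X, ‖T x - T x₀‖ < δ → ∀ ξ : ℝ, |ξ - σ x₀| ≤ δ →
      ξ ∉ spectrum ℝ (T x) := by
    intro x hx ξ hξ
    have hfar : ∀ t ∈ spectrum ℝ (T x₀), 2 * δ ≤ |ξ - t| := by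
      intro t ht
      have h1 := hS t ht
      have h2 : |t - σ x₀| - |ξ - σ x₀| ≤ |t - ξ| := by
        have := abs_sub_abs_le_abs_sub (t - σ x₀) (ξ - σ x₀)
        simpa using this
      rw [abs_sub_comm ξ t]
      linarith
    have hne : ∀ t ∈ spectrum ℝ (T x₀), ξ - t ≠ 0 := by
      intro t ht h0
      have := hfar t ht
      rw [h0, abs_zero] at this
      linarith
    have hcont : ContinuousOn (fun t : ℝ => (ξ - t)⁻¹) (spectrum ℝ (T x₀)) :=
      ContinuousOn.inv₀ (by fun_prop) hne
    set B : H →L[ℂ] H := cfc (fun t : ℝ => (ξ - t)⁻¹) (T x₀) with hB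
    have hu : cfc (fun t : ℝ => ξ - t) (T x₀) = algebraMap ℝ (H →L[ℂ] H) ξ - T x₀ := by
      rw [cfc_sub (fun _ : ℝ => ξ) (fun t : ℝ => t) (T x₀), cfc_const ξ (T x₀),
        cfc_id' ℝ (T x₀)]
    set u : H →L[ℂ] H := algebraMap ℝ (H →L[ℂ] H) ξ - T x₀ with hud
    have h1 : u * B = 1 := by
      rw [← hu, hB, ← cfc_mul _ _ (T x₀) (by fun_prop) hcont, ← cfc_one ℝ (T x₀)]
      exact cfc_congr fun t ht => mul_inv_cancel₀ (hne t ht)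
    have h2 : B * u = 1 := by
      rw [← hu, hB, ← cfc_mul _ _ (T x₀) hcont (by fun_prop), ← cfc_one ℝ (T x₀)]
      exact cfc_congr fun t ht => inv_mul_cancel₀ (hne t ht)
    have hBnorm : ‖B‖ ≤ (2 * δ)⁻¹ := by
      rw [hB]
      apply norm_cfc_le (by positivity)
      intro t ht
      rw [Real.norm_eq_abs, abs_inv]
      exact inv_anti₀ (by positivity) (hfar t ht)
    set z : H →L[ℂ] H := B * (T x - T x₀) with hz
    have hznorm : ‖z‖ < 1 := by
      have := norm_mul_le B (T x - T x₀)
      have h4 : ‖B‖ * ‖T x - T x₀‖ ≤ (2 * δ)⁻¹ * δ := by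
        apply mul_le_mul hBnorm hx.le (norm_nonneg _) (by positivity)
      have h5 : (2 * δ)⁻¹ * δ = 1 / 2 := by field_simp
      calc ‖z‖ ≤ ‖B‖ * ‖T x - T x₀‖ := this
        _ ≤ 1 / 2 := by rw [← h5]; exact h4
        _ < 1 := by norm_num
    have hfac : algebraMap ℝ (H →L[ℂ] H) ξ - T x = u * (1 - z) := by
      rw [mul_sub, mul_one, hz, ← mul_assoc, h1, one_mul, hud]
      abel
    rw [spectrum.notMem_iff, hfac]
    exact (isUnit_iff_exists.mpr ⟨B, h1, h2⟩).mul (Units.oneSub z hznorm).isUnit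
  -- the fixed cutoff function
  set g : ℝ → ℝ := fun t => min 1 (max 0 ((t - (σ x₀ - δ)) / (2 * δ))) with hgdef
  have hg : Continuous g := by fun_prop
  have heq : ∀ᶠ x in 𝓝 x₀, P x = cfc g (T x) := by
    have hT' : ∀ᶠ x in 𝓝 x₀, ‖T x - T x₀‖ < δ := by
      have h := hT.continuousAt (x := x₀)
      rw [ContinuousAt, Metric.tendsto_nhds] at h
      filter_upwards [h δ hδpos] with x hx
      rwa [dist_eq_norm] at hx
    have hσ' : ∀ᶠ x in 𝓝 x₀, |σ x - σ x₀| < δ := by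
      have h := hσ.continuousAt (x := x₀)
      rw [ContinuousAt, Metric.tendsto_nhds] at h
      filter_upwards [h δ hδpos] with x hx
      rwa [Real.dist_eq] at hx
    filter_upwards [hT', hσ'] with x h1 h2
    obtain ⟨f, hf, hf1, hf0, hPx⟩ := hP x
    rw [hPx]
    apply cfc_congr
    intro t ht
    have hout : δ < |t - σ x₀| := by
      by_contra h
      push_neg at h
      exact claim x h1 t h ht
    rcases lt_abs.mp hout with h | h
    · -- t above the gap
      have hσx : σ x < t := by
        have := abs_lt.mp h2
        linarith
      have hft : f t = 1 := hf1 t ht hσx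
      have hgt : g t = 1 := by
        have hq : (1 : ℝ) ≤ (t - (σ x₀ - δ)) / (2 * δ) := by
          rw [le_div_iff₀ (by positivity)]
          linarith
        simp only [hgdef]
        exact min_eq_left (le_max_of_le_right hq)
      rw [hft, hgt]
    · -- t below the gap
      have hσx : t < σ x := by
        have := abs_lt.mp h2
        linarith
      have hft : f t = 0 := hf0 t ht hσx
      have hgt : g t = 0 := by
        have hq : (t - (σ x₀ - δ)) / (2 * δ) ≤ 0 := by
          apply div_nonpos_of_nonpos_of_nonneg _ (by positivity)
          linarith
        simp only [hgdef]
        rw [max_eq_left hq, min_eq_right zero_le_one]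
      rw [hft, hgt]
  exact ContinuousAt.congr
    ((continuous_cfc_comp_aux g hg T hT hsa).continuousAt)
    (Filter.EventuallyEq.symm heq)
end
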